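/- Let γ > 1 and define χ(π) := γπ/(π+1), e(π) := (γ−1)/(γ−1−π), ζ(π) := (π+1)(χ(π)−π)χ'(π) + 2χ(π)(1−χ(π)) and η(π) := (2π+1)χ(π) − π. Set π_m := γ−1 if 1 < γ ≤ 2 and π_m := 1/(γ−1) if γ ≥ 2. Then for every π with 0 < π < π_m one has: 0 < π < 1, 0 < χ(π) < 1, ζ(π) > 0, η(π) > 0 and e(π) > 1. Conversely, if γ ≤ 1, then e(π) < 1 for every π ∈ (0,1), so the positivity requirement e(π) > 1 (i.e. ρ > n > 0) fails everywhere on (0,1). -/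

import Mathlib

/-!
For `1 < γ` the bound `π < π_m` amounts to the two inequalities `π < γ - 1` and
`π (γ - 1) < 1`; the first is `e(π) > 1`, the second is `χ(π) < 1`, and together they
give `π² < π (γ - 1) < 1`. After clearing the denominator `π + 1`, `η` has numerator
`π (π (2γ - 1) + γ - 1)`, visibly positive, and `ζ` has numerator `γ π (γ + 1 + π - 2γπ)`,
where `γ + 1 + π - 2γπ = (γ - 1 - π) + 2 (1 - π (γ - 1))` is a sum of the two positive gaps.
-/

noncomputable section

namespace IdealGas

def indicatrix (γ π : ℝ) : ℝ := γ * π / (π + 1)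

def specificEnergy (γ π : ℝ) : ℝ := (γ - 1) / (γ - 1 - π)

def zeta (χ : ℝ → ℝ) (π : ℝ) : ℝ :=
  (π + 1) * (χ π - π) * deriv χ π + 2 * χ π * (1 - χ π)

def eta (χ : ℝ → ℝ) (π : ℝ) : ℝ := (2 * π + 1) * χ π - π

def piMax (γ : ℝ) : ℝ := if γ ≤ 2 then γ - 1 else 1 / (γ - 1)

variable {γ π : ℝ}

theorem lt_sub_one_and_mul_lt_one_of_lt_piMax (hγ : 1 < γ) (hπm : π < piMax γ) :
    π < γ - 1 ∧ π * (γ - 1) < 1 := by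
  have hγ1 : 0 < γ - 1 := sub_pos.2 hγ
  unfold piMax at hπm
  split_ifs at hπm with h2
  · exact ⟨hπm, by nlinarith⟩
  · have hmul : π * (γ - 1) < 1 := (lt_div_iff₀ hγ1).1 hπm
    exact ⟨by nlinarith, hmul⟩

theorem hasDerivAt_indicatrix (hπ : π + 1 ≠ 0) :
    HasDerivAt (indicatrix γ) (γ / (π + 1) ^ 2) π := by
  have h : HasDerivAt (fun t => γ * t / (t + 1))
      ((γ * 1 * (π + 1) - γ * π * 1) / (π + 1) ^ 2) π :=
    ((hasDerivAt_id' π).const_mul γ).div ((hasDerivAt_id' π).add_const 1) hπ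
  exact h.congr_deriv (by ring)

theorem zeta_indicatrix (hπ : π + 1 ≠ 0) :
    zeta (indicatrix γ) π = γ * π * (γ + 1 + π - 2 * γ * π) / (π + 1) ^ 2 := by
  rw [zeta, (hasDerivAt_indicatrix hπ).deriv, indicatrix]
  field_simp
  ring

theorem eta_indicatrix (hπ : π + 1 ≠ 0) :
    eta (indicatrix γ) π = π * (π * (2 * γ - 1) + (γ - 1)) / (π + 1) := by
  rw [eta, indicatrix]
  field_simp
  ring

theorem indicatrix_pos (hγ : 0 < γ) (hπ : 0 < π) : 0 < indicatrix γ π := by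
  unfold indicatrix
  positivity

theorem indicatrix_lt_one_iff (hπ : 0 < π + 1) : indicatrix γ π < 1 ↔ π * (γ - 1) < 1 := by
  rw [indicatrix, div_lt_one hπ]
  constructor <;> intro h <;> linarith

theorem zeta_indicatrix_pos (hπ : 0 < π) (hπγ : π < γ - 1) (hπγ' : π * (γ - 1) < 1) :
    0 < zeta (indicatrix γ) π := by
  have hγ : 0 < γ := by linarith
  have hgaps : 0 < γ + 1 + π - 2 * γ * π := by nlinarith
  rw [zeta_indicatrix (by linarith)]
  positivity

theorem eta_indicatrix_pos (hγ : 1 ≤ γ) (hπ : 0 < π) : 0 < eta (indicatrix γ) π := by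
  have hnum : 0 < π * (2 * γ - 1) + (γ - 1) := by nlinarith
  rw [eta_indicatrix (by linarith)]
  positivity

theorem one_lt_specificEnergy (hπ : 0 < π) (hπγ : π < γ - 1) : 1 < specificEnergy γ π := by
  rw [specificEnergy, one_lt_div (by linarith)]
  linarith

theorem specificEnergy_lt_one (hγ : γ ≤ 1) (hπ : 0 < π) : specificEnergy γ π < 1 := by
  rw [specificEnergy, div_lt_one_of_neg (by linarith)]
  linarith

end IdealGas

open IdealGas

theorem classical_ideal_gas_physical_conditions (γ : ℝ) :
    (1 < γ → ∀ π : ℝ, 0 < π → π < (if γ ≤ 2 then γ - 1 else 1 / (γ - 1)) →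
      (0 < π ∧ π < 1)
      ∧ (0 < γ * π / (π + 1) ∧ γ * π / (π + 1) < 1)
      ∧ 0 < (π + 1) * (γ * π / (π + 1) - π) * deriv (fun t => γ * t / (t + 1)) π
          + 2 * (γ * π / (π + 1)) * (1 - γ * π / (π + 1))
      ∧ 0 < (2 * π + 1) * (γ * π / (π + 1)) - π
      ∧ 1 < (γ - 1) / (γ - 1 - π))
    ∧ (γ ≤ 1 → ∀ π : ℝ, 0 < π → π < 1 → (γ - 1) / (γ - 1 - π) < 1) := by
  refine ⟨fun hγ π hπ hπm => ?_, fun hγ π hπ _ => specificEnergy_lt_one hγ hπ⟩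
  obtain ⟨hπγ, hπγ'⟩ := lt_sub_one_and_mul_lt_one_of_lt_piMax hγ hπm
  have hπ1 : π < 1 := by nlinarith
  exact ⟨⟨hπ, hπ1⟩,
    ⟨indicatrix_pos (by linarith) hπ, (indicatrix_lt_one_iff (by linarith)).2 hπγ'⟩,
    zeta_indicatrix_pos hπ hπγ hπγ', eta_indicatrix_pos hγ.le hπ, one_lt_specificEnergy hπ hπγ⟩
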